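/- arXiv:1304.1075 — 2 statements merged into one kernel-verified Lean document; each statement's English description precedes it below -/
import Mathlib

section
/- Let F be a nonempty set system on N containing all singletons (atomistic), and v a nonnegative game on F. Then core(v) = core⁺(v), where core⁺(v) is the set of nonnegative core elements. Moreover, if F is closed under intersection, v is nonnegative and balanced, and F is not atomistic, then core(v) ≠ core⁺(v) and core(v) is unbounded. -/
open Finset

/-- The core of a game on a set system. -/
def gameCore {α : Type*} [Fintype α] (F : Finset (Finset α)) (v : Finset α → ℝ) :
    Set (α → ℝ) :=
  {x | (∀ S ∈ F, v S ≤ ∑ i ∈ S, x i) ∧ ∑ i, x i = v Finset.univ}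

/-- The positive core of a game on a set system. -/
def gameCorePos {α : Type*} [Fintype α] (F : Finset (Finset α)) (v : Finset α → ℝ) :
    Set (α → ℝ) :=
  {x | x ∈ gameCore F v ∧ ∀ i, 0 ≤ x i}

/-!
If all singletons are in `F`, the constraints `x i ≥ v {i} ≥ 0` already force a core element to
be nonnegative. Otherwise, if `F` is closed under intersection, some player `i` has a smallest
coalition `T ∈ F` containing it, and `T` holds a second player `j`. Every coalition of `F`
containing `i` then contains `j`, so moving payoff from `i` to `j` never violates a core
constraint: the core contains the ray `x + t • (e_j - e_i)`, `t ≥ 0`, from any of its points,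
which leaves the nonnegative orthant and is unbounded.
-/

theorem not_isBounded_of_ray_subset {E : Type*} [NormedAddCommGroup E] [NormedSpace ℝ E]
    {s : Set E} {x d : E} (hd : d ≠ 0) (hray : ∀ t : ℝ, 0 ≤ t → x + t • d ∈ s) :
    ¬ Bornology.IsBounded s := by
  intro hs
  obtain ⟨C, hC⟩ := hs.exists_norm_le
  have hd' : 0 < ‖d‖ := norm_pos_iff.mpr hd
  set t := (|C| + ‖x‖ + 1) / ‖d‖
  have ht : ‖t • d‖ = |C| + ‖x‖ + 1 := by
    rw [norm_smul, Real.norm_of_nonneg (by positivity), div_mul_cancel₀ _ hd'.ne']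
  have hle := hC _ (hray t (by positivity))
  have := norm_sub_le (x + t • d) x
  rw [add_sub_cancel_left, ht] at this
  linarith [le_abs_self C]

theorem sum_single_sub_single_nonneg {α : Type*} [DecidableEq α] {i j : α} {S : Finset α}
    (hij : i ∈ S → j ∈ S) : 0 ≤ ∑ k ∈ S, (Pi.single j 1 - Pi.single i 1 : α → ℝ) k := by
  simp only [Pi.sub_apply, Finset.sum_sub_distrib, Finset.sum_pi_single']
  by_cases hi : i ∈ S
  · simp [hi, hij hi]
  · simp only [hi, if_false, sub_zero]
    split_ifs <;> norm_num

theorem exists_minimal_mem_of_inter_mem {α : Type*} [DecidableEq α] {F : Finset (Finset α)}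
    (hinter : ∀ A ∈ F, ∀ B ∈ F, A ∩ B ∈ F)
    {S₀ : Finset α} (hS₀ : S₀ ∈ F) {i : α} (hi : i ∈ S₀) :
    ∃ T ∈ F, i ∈ T ∧ ∀ S ∈ F, i ∈ S → T ⊆ S := by
  set G := F.filter (i ∈ ·)
  have hG : G.Nonempty := ⟨S₀, mem_filter.mpr ⟨hS₀, hi⟩⟩
  refine ⟨G.inf' hG id, ?_, ?_, fun S hS hiS => G.inf'_le id (mem_filter.mpr ⟨hS, hiS⟩)⟩
  · exact Finset.inf'_mem (F : Set (Finset α)) hinter G hG id fun S hS => (mem_filter.mp hS).1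
  · exact (Finset.mem_inf' hG).mpr fun S hS => (mem_filter.mp hS).2

section Core

variable {α : Type*} [Fintype α] {F : Finset (Finset α)} {v : Finset α → ℝ}

theorem gameCore_eq_gameCorePos_of_atomistic (hatom : ∀ i : α, {i} ∈ F)
    (hv : ∀ i : α, 0 ≤ v {i}) : gameCore F v = gameCorePos F v := by
  ext x
  refine ⟨fun hx => ⟨hx, fun i => ?_⟩, And.left⟩
  simpa using (hv i).trans (hx.1 {i} (hatom i))

theorem add_smul_mem_gameCore {x d : α → ℝ} (hx : x ∈ gameCore F v)
    (hdF : ∀ S ∈ F, 0 ≤ ∑ k ∈ S, d k) (hduniv : ∑ k, d k = 0) {t : ℝ} (ht : 0 ≤ t) :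
    x + t • d ∈ gameCore F v := by
  have hsum : ∀ S : Finset α, ∑ k ∈ S, (x + t • d) k = ∑ k ∈ S, x k + t * ∑ k ∈ S, d k := by
    simp [Finset.sum_add_distrib, Finset.mul_sum]
  refine ⟨fun S hS => ?_, ?_⟩
  · rw [hsum]
    linarith [hx.1 S hS, mul_nonneg ht (hdF S hS)]
  · rw [hsum, hduniv, mul_zero, add_zero, hx.2]

end Core

theorem core_eq_corePos_iff_atomistic_general
    {α : Type*} [Fintype α] [DecidableEq α] (F : Finset (Finset α))
    (huniv : Finset.univ ∈ F)
    (v : Finset α → ℝ) (hvnn : ∀ S ∈ F, 0 ≤ v S) :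
    ((∀ i : α, {i} ∈ F) → gameCore F v = gameCorePos F v) ∧
    ((∀ A ∈ F, ∀ B ∈ F, A ∩ B ∈ F) → (gameCore F v).Nonempty →
      ¬ (∀ i : α, {i} ∈ F) →
      gameCore F v ≠ gameCorePos F v ∧ ¬ Bornology.IsBounded (gameCore F v)) := by
  refine ⟨fun hatom => gameCore_eq_gameCorePos_of_atomistic hatom fun i => hvnn {i} (hatom i), ?_⟩
  rintro hinter ⟨x, hx⟩ hnatom
  obtain ⟨i, hi⟩ := not_forall.mp hnatom
  obtain ⟨T, hTF, hiT, hTmin⟩ := exists_minimal_mem_of_inter_mem hinter huniv (mem_univ i)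
  obtain ⟨j, hjT, hji⟩ : ∃ j ∈ T, j ≠ i := by
    by_contra! h
    exact hi (eq_singleton_iff_unique_mem.mpr ⟨hiT, h⟩ ▸ hTF)
  set d : α → ℝ := Pi.single j 1 - Pi.single i 1
  have hray : ∀ t : ℝ, 0 ≤ t → x + t • d ∈ gameCore F v := fun t =>
    add_smul_mem_gameCore hx
      (fun S hS => sum_single_sub_single_nonneg fun hiS => hTmin S hS hiS hjT)
      (by simp [Finset.sum_sub_distrib])
  refine ⟨fun heq => ?_, not_isBounded_of_ray_subset (fun h => ?_) hray⟩
  · have hneg := (heq ▸ hray _ (le_max_left 0 (x i + 1))).2 i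
    simp only [d, Pi.add_apply, Pi.smul_apply, Pi.sub_apply, Pi.single_eq_same,
      Pi.single_eq_of_ne hji.symm, smul_eq_mul] at hneg
    linarith [le_max_right 0 (x i + 1)]
  · simpa [d, hji] using congrFun h j

/-- If `F` is atomistic and `v` nonnegative, the core equals the positive core.
If `F` is closed under intersection, `v` is nonnegative and balanced, and `F` is not
atomistic, then the core differs from the positive core and is unbounded. -/
theorem core_eq_corePos_iff_atomistic
    {α : Type*} [Fintype α] [DecidableEq α] (F : Finset (Finset α))
    (hempty : ∅ ∈ F) (huniv : Finset.univ ∈ F)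
    (v : Finset α → ℝ) (hv0 : v ∅ = 0) (hvnn : ∀ S ∈ F, 0 ≤ v S) :
    ((∀ i : α, {i} ∈ F) → gameCore F v = gameCorePos F v) ∧
    ((∀ A ∈ F, ∀ B ∈ F, A ∩ B ∈ F) → (gameCore F v).Nonempty →
      ¬ (∀ i : α, {i} ∈ F) →
      gameCore F v ≠ gameCorePos F v ∧ ¬ Bornology.IsBounded (gameCore F v)) :=
  core_eq_corePos_iff_atomistic_general F huniv v hvnn
end

section
/- Let F be an arbitrary set system on N and v a game on F. For any nonnegative game v, core⁺(v) = core⁺(v̄), where v̄ is the extension of v to 2^N given by summing v over the maximal feasible subsets, provided F is weakly union-closed. -/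
open Finset
open scoped Classical

/-- The extension of a game `v` on `F` to all coalitions, summing `v` over the maximal
feasible subsets. -/
noncomputable def extGame {α : Type*} [Fintype α] [DecidableEq α]
    (F : Finset (Finset α)) (v : Finset α → ℝ) (S : Finset α) : ℝ :=
  ∑ T ∈ F.filter (fun T => T ⊆ S ∧ ∀ U ∈ F, U ⊆ S → T ⊆ U → T = U), v T

/-! The maximal feasible subsets of `S` are pairwise disjoint (two overlapping
ones would have a feasible union inside `S`), so `x(S) ≥ ∑ x(T) ≥ ∑ v(T) = v̄(S)` for every
nonnegative `x` satisfying the core inequalities of `v`; conversely `v̄` agrees with `v` on `F`. -/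

section

variable {α : Type*} [DecidableEq α]

def maximalFeasible (F : Finset (Finset α)) (S : Finset α) : Finset (Finset α) :=
  F.filter (fun T => T ⊆ S ∧ ∀ U ∈ F, U ⊆ S → T ⊆ U → T = U)

variable {F : Finset (Finset α)} {S T : Finset α}

theorem mem_maximalFeasible :
    T ∈ maximalFeasible F S ↔ T ∈ F ∧ T ⊆ S ∧ ∀ U ∈ F, U ⊆ S → T ⊆ U → T = U :=
  mem_filter

theorem maximalFeasible_of_mem (hS : S ∈ F) : maximalFeasible F S = {S} := by
  ext T
  rw [mem_maximalFeasible, mem_singleton]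
  constructor
  · rintro ⟨-, hTS, hmax⟩
    exact hmax S hS Subset.rfl hTS
  · rintro rfl
    exact ⟨hS, Subset.rfl, fun U _ hUS hSU => Subset.antisymm hSU hUS⟩

theorem pairwiseDisjoint_maximalFeasible
    (hwuc : ∀ A ∈ F, ∀ B ∈ F, (A ∩ B).Nonempty → A ∪ B ∈ F) (S : Finset α) :
    (maximalFeasible F S : Set (Finset α)).PairwiseDisjoint id := by
  intro T₁ h₁ T₂ h₂ hne
  obtain ⟨h₁F, h₁S, h₁max⟩ := mem_maximalFeasible.mp h₁
  obtain ⟨h₂F, h₂S, h₂max⟩ := mem_maximalFeasible.mp h₂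
  rw [Function.onFun, id, id, disjoint_iff_inter_eq_empty, ← not_nonempty_iff_eq_empty]
  intro hinter
  have hU : T₁ ∪ T₂ ∈ F := hwuc T₁ h₁F T₂ h₂F hinter
  have hUS : T₁ ∪ T₂ ⊆ S := union_subset h₁S h₂S
  exact hne ((h₁max _ hU hUS subset_union_left).trans (h₂max _ hU hUS subset_union_right).symm)

variable [Fintype α] {v : Finset α → ℝ}

-- `extGame` decides its inner `∀` through `Fintype (Finset α)`, not through `F`, so the two
-- filters agree only up to the decidability instance.
theorem extGame_eq_sum_maximalFeasible : extGame F v S = ∑ T ∈ maximalFeasible F S, v T := by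
  unfold extGame maximalFeasible
  congr 1
  ext T
  simp only [mem_filter]

theorem extGame_of_mem (hS : S ∈ F) : extGame F v S = v S := by
  rw [extGame_eq_sum_maximalFeasible, maximalFeasible_of_mem hS, sum_singleton]

theorem extGame_le_sum_of_forall_le
    (hwuc : ∀ A ∈ F, ∀ B ∈ F, (A ∩ B).Nonempty → A ∪ B ∈ F)
    {x : α → ℝ} (hx : ∀ i, 0 ≤ x i) (hxv : ∀ T ∈ F, v T ≤ ∑ i ∈ T, x i) (S : Finset α) :
    extGame F v S ≤ ∑ i ∈ S, x i := by
  have hsub : (maximalFeasible F S).biUnion id ⊆ S := fun i hi => by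
    obtain ⟨T, hT, hiT⟩ := mem_biUnion.mp hi
    exact (mem_maximalFeasible.mp hT).2.1 hiT
  calc extGame F v S = ∑ T ∈ maximalFeasible F S, v T := extGame_eq_sum_maximalFeasible
    _ ≤ ∑ T ∈ maximalFeasible F S, ∑ i ∈ T, x i :=
        sum_le_sum fun T hT => hxv T (mem_maximalFeasible.mp hT).1
    _ = ∑ i ∈ (maximalFeasible F S).biUnion id, x i :=
        (sum_biUnion (pairwiseDisjoint_maximalFeasible hwuc S)).symm
    _ ≤ ∑ i ∈ S, x i := sum_le_sum_of_subset_of_nonneg hsub fun i _ _ => hx i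

end

theorem corePos_eq_corePos_extension_general
    {α : Type*} [Fintype α] [DecidableEq α] (F : Finset (Finset α))
    (huniv : Finset.univ ∈ F)
    (hwuc : ∀ A ∈ F, ∀ B ∈ F, (A ∩ B).Nonempty → A ∪ B ∈ F)
    (v : Finset α → ℝ) :
    {x : α → ℝ | (∀ i, 0 ≤ x i) ∧ (∀ S ∈ F, v S ≤ ∑ i ∈ S, x i) ∧
      ∑ i, x i = v Finset.univ} =
    {x : α → ℝ | (∀ i, 0 ≤ x i) ∧ (∀ S : Finset α, extGame F v S ≤ ∑ i ∈ S, x i) ∧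
      ∑ i, x i = extGame F v Finset.univ} := by
  ext x
  rw [Set.mem_ofPred_eq, Set.mem_ofPred_eq, extGame_of_mem huniv]
  refine and_congr_right fun hx => and_congr_left fun _ => ⟨?_, ?_⟩
  · exact extGame_le_sum_of_forall_le hwuc hx
  · intro hcore S hS
    simpa only [extGame_of_mem hS] using hcore S

/-- For a weakly union-closed system and a nonnegative game, the positive core of `v`
equals the positive core of its extension `v̄`. -/
theorem corePos_eq_corePos_extension
    {α : Type*} [Fintype α] [DecidableEq α] (F : Finset (Finset α))
    (hempty : ∅ ∈ F) (huniv : Finset.univ ∈ F)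
    (hwuc : ∀ A ∈ F, ∀ B ∈ F, (A ∩ B).Nonempty → A ∪ B ∈ F)
    (v : Finset α → ℝ) (hv0 : v ∅ = 0) (hvnn : ∀ S ∈ F, 0 ≤ v S) :
    {x : α → ℝ | (∀ i, 0 ≤ x i) ∧ (∀ S ∈ F, v S ≤ ∑ i ∈ S, x i) ∧
      ∑ i, x i = v Finset.univ} =
    {x : α → ℝ | (∀ i, 0 ≤ x i) ∧ (∀ S : Finset α, extGame F v S ≤ ∑ i ∈ S, x i) ∧
      ∑ i, x i = extGame F v Finset.univ} :=
  corePos_eq_corePos_extension_general F huniv hwuc v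
end
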